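/- arXiv:2308.15751 — 5 statements merged into one kernel-verified Lean document; each statement's English description precedes it below -/
import Mathlib

section
/- The set ℒ = {l ∈ L : B(l,l) = -1 and B(l,h) = 1} has exactly 27 elements; explicitly ℒ consists of the classes eᵢ (1 ≤ i ≤ 6), e₀ - eᵢ - eⱼ (1 ≤ i < j ≤ 6), and 2e₀ - (e₁ + ⋯ + e₆) + eᵢ (1 ≤ i ≤ 6). (The 27 lines on a smooth cubic surface in their planar representation.) -/
/-- The intersection form on the lattice `I^{1,6} ≅ H²(S,ℤ)` of a smooth cubic surface. -/
def B (x y : Fin 7 → ℤ) : ℤ := x 0 * y 0 - ∑ i : Fin 6, x i.succ * y i.succ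

/-- The hyperplane class `h = 3e₀ - e₁ - ⋯ - e₆`. -/
def h : Fin 7 → ℤ := fun j => if j = 0 then 3 else -1

/-- The orthogonal basis vectors `e₀, …, e₆` of `I^{1,6}`. -/
def e (i : Fin 7) : Fin 7 → ℤ := fun j => if j = i then 1 else 0

/-- The set of line classes `{l : B(l,l) = -1, B(l,h) = 1}`. -/
def Lines : Set (Fin 7 → ℤ) := {l | B l l = -1 ∧ B l h = 1}

/-- The explicit list of the 27 line classes. -/
def linesList : List (Fin 7 → ℤ) :=
  [e 1, e 2, e 3, e 4, e 5, e 6,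
   e 0 - e 1 - e 2, e 0 - e 1 - e 3, e 0 - e 1 - e 4, e 0 - e 1 - e 5, e 0 - e 1 - e 6,
   e 0 - e 2 - e 3, e 0 - e 2 - e 4, e 0 - e 2 - e 5, e 0 - e 2 - e 6,
   e 0 - e 3 - e 4, e 0 - e 3 - e 5, e 0 - e 3 - e 6,
   e 0 - e 4 - e 5, e 0 - e 4 - e 6, e 0 - e 5 - e 6,
   (fun k => if k = 0 then 2 else if k = (1:Fin 7) then 0 else -1),
   (fun k => if k = 0 then 2 else if k = (2:Fin 7) then 0 else -1),
   (fun k => if k = 0 then 2 else if k = (3:Fin 7) then 0 else -1),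
   (fun k => if k = 0 then 2 else if k = (4:Fin 7) then 0 else -1),
   (fun k => if k = 0 then 2 else if k = (5:Fin 7) then 0 else -1),
   (fun k => if k = 0 then 2 else if k = (6:Fin 7) then 0 else -1)]

lemma aux01 (x : ℤ) : 0 ≤ x * (x - 1) := by
  rcases le_or_gt x 0 with hx | hx
  · have := mul_nonneg (by omega : (0:ℤ) ≤ -x) (by omega : (0:ℤ) ≤ 1 - x); nlinarith
  · exact mul_nonneg (by omega) (by omega)

lemma aux10 (x : ℤ) : 0 ≤ x * (x + 1) := by
  rcases le_or_gt x (-1) with hx | hx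
  · have := mul_nonneg (by omega : (0:ℤ) ≤ -x) (by omega : (0:ℤ) ≤ -x - 1); nlinarith
  · exact mul_nonneg (by omega) (by omega)

lemma key01 (b1 b2 b3 b4 b5 b6 : ℤ)
    (hq : b1*b1 + b2*b2 + b3*b3 + b4*b4 + b5*b5 + b6*b6 = b1 + b2 + b3 + b4 + b5 + b6) :
    (b1 = 0 ∨ b1 = 1) ∧ (b2 = 0 ∨ b2 = 1) ∧ (b3 = 0 ∨ b3 = 1) ∧
    (b4 = 0 ∨ b4 = 1) ∧ (b5 = 0 ∨ b5 = 1) ∧ (b6 = 0 ∨ b6 = 1) := by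
  have a1 := aux01 b1; have a2 := aux01 b2; have a3 := aux01 b3
  have a4 := aux01 b4; have a5 := aux01 b5; have a6 := aux01 b6
  refine ⟨?_, ?_, ?_, ?_, ?_, ?_⟩ <;>
    [ (have : b1 * (b1 - 1) = 0 := by nlinarith);
      (have : b2 * (b2 - 1) = 0 := by nlinarith);
      (have : b3 * (b3 - 1) = 0 := by nlinarith);
      (have : b4 * (b4 - 1) = 0 := by nlinarith);
      (have : b5 * (b5 - 1) = 0 := by nlinarith);
      (have : b6 * (b6 - 1) = 0 := by nlinarith)] <;>
    · rcases mul_eq_zero.mp this with hh | hh <;> omega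

lemma key10 (b1 b2 b3 b4 b5 b6 : ℤ)
    (hq : b1*b1 + b2*b2 + b3*b3 + b4*b4 + b5*b5 + b6*b6 = -(b1 + b2 + b3 + b4 + b5 + b6)) :
    (b1 = -1 ∨ b1 = 0) ∧ (b2 = -1 ∨ b2 = 0) ∧ (b3 = -1 ∨ b3 = 0) ∧
    (b4 = -1 ∨ b4 = 0) ∧ (b5 = -1 ∨ b5 = 0) ∧ (b6 = -1 ∨ b6 = 0) := by
  have a1 := aux10 b1; have a2 := aux10 b2; have a3 := aux10 b3
  have a4 := aux10 b4; have a5 := aux10 b5; have a6 := aux10 b6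
  refine ⟨?_, ?_, ?_, ?_, ?_, ?_⟩ <;>
    [ (have : b1 * (b1 + 1) = 0 := by nlinarith);
      (have : b2 * (b2 + 1) = 0 := by nlinarith);
      (have : b3 * (b3 + 1) = 0 := by nlinarith);
      (have : b4 * (b4 + 1) = 0 := by nlinarith);
      (have : b5 * (b5 + 1) = 0 := by nlinarith);
      (have : b6 * (b6 + 1) = 0 := by nlinarith)] <;>
    · rcases mul_eq_zero.mp this with hh | hh <;> omega

set_option maxHeartbeats 2000000 in
lemma lines_forward (l : Fin 7 → ℤ) (h1 : B l l = -1) (h2 : B l h = 1) :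
    (∃ i : Fin 7, i ≠ 0 ∧ l = e i) ∨
      (∃ i j : Fin 7, 0 < i ∧ i < j ∧ l = e 0 - e i - e j) ∨
      (∃ i : Fin 7, i ≠ 0 ∧
        l = (fun k => if k = 0 then 2 else if k = i then 0 else -1)) := by
  simp only [B, h, Fin.sum_univ_six,
    show (Fin.succ 0 : Fin 7) = 1 from rfl, show (Fin.succ 1 : Fin 7) = 2 from rfl,
    show (Fin.succ 2 : Fin 7) = 3 from rfl, show (Fin.succ 3 : Fin 7) = 4 from rfl,
    show (Fin.succ 4 : Fin 7) = 5 from rfl, show (Fin.succ 5 : Fin 7) = 6 from rfl,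
    Fin.reduceEq, if_false, if_true, ite_true, ite_false] at h1 h2
  obtain ⟨a, b1, b2, b3, b4, b5, b6, ha, hb1, hb2, hb3, hb4, hb5, hb6⟩ :
      ∃ a b1 b2 b3 b4 b5 b6 : ℤ, l 0 = a ∧ l 1 = b1 ∧ l 2 = b2 ∧ l 3 = b3 ∧ l 4 = b4 ∧
        l 5 = b5 ∧ l 6 = b6 := ⟨_, _, _, _, _, _, _, rfl, rfl, rfl, rfl, rfl, rfl, rfl⟩
  rw [ha, hb1, hb2, hb3, hb4, hb5, hb6] at h1 h2
  have hvec : l = ![a, b1, b2, b3, b4, b5, b6] := by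
    funext j; fin_cases j <;> simpa using (by assumption : _ = _)
  rw [hvec]; clear hvec ha hb1 hb2 hb3 hb4 hb5 hb6
  have key : (b1 + b2 + b3 + b4 + b5 + b6)^2 ≤
      6*(b1*b1 + b2*b2 + b3*b3 + b4*b4 + b5*b5 + b6*b6) := by
    nlinarith [sq_nonneg (b1-b2), sq_nonneg (b1-b3), sq_nonneg (b1-b4), sq_nonneg (b1-b5),
      sq_nonneg (b1-b6), sq_nonneg (b2-b3), sq_nonneg (b2-b4), sq_nonneg (b2-b5), sq_nonneg (b2-b6),
      sq_nonneg (b3-b4), sq_nonneg (b3-b5), sq_nonneg (b3-b6), sq_nonneg (b4-b5), sq_nonneg (b4-b6),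
      sq_nonneg (b5-b6)]
  have key2 : 3*a*a - 6*a - 5 ≤ 0 := by nlinarith [key]
  have ha0 : 0 ≤ a := by nlinarith [key2, sq_nonneg (a+1)]
  have ha2 : a ≤ 2 := by nlinarith [key2, sq_nonneg (a-3)]
  interval_cases a
  · obtain ⟨c1, c2, c3, c4, c5, c6⟩ := key01 b1 b2 b3 b4 b5 b6 (by linarith)
    rcases c1 with rfl | rfl <;> rcases c2 with rfl | rfl <;> rcases c3 with rfl | rfl <;>
      rcases c4 with rfl | rfl <;> rcases c5 with rfl | rfl <;> rcases c6 with rfl | rfl <;>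
      first
        | omega
        | decide
  · obtain ⟨c1, c2, c3, c4, c5, c6⟩ := key10 b1 b2 b3 b4 b5 b6 (by linarith)
    rcases c1 with rfl | rfl <;> rcases c2 with rfl | rfl <;> rcases c3 with rfl | rfl <;>
      rcases c4 with rfl | rfl <;> rcases c5 with rfl | rfl <;> rcases c6 with rfl | rfl <;>
      first
        | omega
        | decide
  · obtain ⟨c1, c2, c3, c4, c5, c6⟩ := key10 b1 b2 b3 b4 b5 b6 (by linarith)
    rcases c1 with rfl | rfl <;> rcases c2 with rfl | rfl <;> rcases c3 with rfl | rfl <;>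
      rcases c4 with rfl | rfl <;> rcases c5 with rfl | rfl <;> rcases c6 with rfl | rfl <;>
      first
        | omega
        | decide

lemma lines_eq_setOf :
    Lines = {l | (∃ i : Fin 7, i ≠ 0 ∧ l = e i) ∨
      (∃ i j : Fin 7, 0 < i ∧ i < j ∧ l = e 0 - e i - e j) ∨
      (∃ i : Fin 7, i ≠ 0 ∧
        l = (fun k => if k = 0 then 2 else if k = i then 0 else -1))} := by
  ext l
  constructor
  · rintro ⟨h1, h2⟩
    exact lines_forward l h1 h2
  · rintro (⟨i, hi, rfl⟩ | ⟨i, j, hi, hij, rfl⟩ | ⟨i, hi, rfl⟩)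
    · exact (by decide : ∀ i : Fin 7, i ≠ 0 → B (e i) (e i) = -1 ∧ B (e i) h = 1) i hi
    · exact (by decide : ∀ i j : Fin 7, 0 < i → i < j →
        B (e 0 - e i - e j) (e 0 - e i - e j) = -1 ∧ B (e 0 - e i - e j) h = 1) i j hi hij
    · exact (by decide : ∀ i : Fin 7, i ≠ 0 →
        B (fun k => if k = 0 then 2 else if k = i then 0 else (-1:ℤ))
          (fun k => if k = 0 then 2 else if k = i then 0 else (-1:ℤ)) = -1 ∧
        B (fun k => if k = 0 then 2 else if k = i then 0 else (-1:ℤ)) h = 1) i hi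

set_option maxHeartbeats 1000000 in
lemma setOf_eq_finset :
    {l : Fin 7 → ℤ | (∃ i : Fin 7, i ≠ 0 ∧ l = e i) ∨
      (∃ i j : Fin 7, 0 < i ∧ i < j ∧ l = e 0 - e i - e j) ∨
      (∃ i : Fin 7, i ≠ 0 ∧
        l = (fun k => if k = 0 then 2 else if k = i then 0 else -1))}
      = ↑linesList.toFinset := by
  ext l
  simp only [Set.mem_setOf_eq, Finset.coe_sort_coe, Finset.mem_coe]
  constructor
  · rintro (⟨i, hi, rfl⟩ | ⟨i, j, hi, hij, rfl⟩ | ⟨i, hi, rfl⟩)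
    · exact (by decide : ∀ i : Fin 7, i ≠ 0 → (e i) ∈ linesList.toFinset) i hi
    · exact (by decide : ∀ i j : Fin 7, 0 < i → i < j →
        (e 0 - e i - e j) ∈ linesList.toFinset) i j hi hij
    · exact (by decide : ∀ i : Fin 7, i ≠ 0 →
        (fun k => if k = 0 then 2 else if k = i then 0 else (-1:ℤ)) ∈ linesList.toFinset) i hi
  · intro hl
    exact (by decide : ∀ l ∈ linesList.toFinset,
      (∃ i : Fin 7, i ≠ 0 ∧ l = e i) ∨
        (∃ i j : Fin 7, 0 < i ∧ i < j ∧ l = e 0 - e i - e j) ∨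
        (∃ i : Fin 7, i ≠ 0 ∧
          l = (fun k => if k = 0 then 2 else if k = i then 0 else -1))) l hl

/-- There are exactly 27 line classes, namely `eᵢ`, `e₀ - eᵢ - eⱼ` and
`2e₀ - (e₁ + ⋯ + e₆) + eᵢ`. -/
theorem lines_card_and_classification :
    Lines.ncard = 27 ∧
    Lines = {l | (∃ i : Fin 7, i ≠ 0 ∧ l = e i) ∨
      (∃ i j : Fin 7, 0 < i ∧ i < j ∧ l = e 0 - e i - e j) ∨
      (∃ i : Fin 7, i ≠ 0 ∧
        l = (fun k => if k = 0 then 2 else if k = i then 0 else -1))} := by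
  refine ⟨?_, lines_eq_setOf⟩
  rw [lines_eq_setOf, setOf_eq_finset, Set.ncard_coe_finset]
  decide
end

section
/- For every root α ∈ R, the number of ordered pairs (l₁, l₂) ∈ ℒ × ℒ with l₁ - l₂ = α is exactly 6. (Proposition 2.2: every root on a smooth cubic surface can be written as the difference [L₁] - [L₂] of a pair of skew lines in exactly 6 different ways.) -/
/-- The root system `R = {α : B(α,α) = -2, B(α,h) = 0}` (primitive vanishing cycles). -/
def R : Set (Fin 7 → ℤ) := {α | B α α = -2 ∧ B α h = 0}

/-!
If `l₁ - l₂ = α` for lines `l₁, l₂` and a root `α`, expanding `B(α, α) = -2` gives `B(l₁, l₂) = 0`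
(the lines are skew) and hence `B(l₁, α) = -1`; conversely `l - α` is a line for every line `l` with
`B(l, α) = -1`. So the pairs are counted by the lines `l` with `B(l, α) = -1`.

Lines and roots both satisfy `B(x, x) = B(x, h) - 2` (adjunction, with `K = -h`). Writing
`x = (a, b₁, …, b₆)`, this gives `∑ bᵢ² = a² + 2 - B(x, h)` and `∑ bᵢ = B(x, h) - 3a`, and
Cauchy–Schwarz `(∑ bᵢ)² ≤ 6 ∑ bᵢ²` forces `|a| ≤ 2`; comparing a single `bᵢ²`, `bᵢ(bᵢ ± 1)` with
the corresponding (nonnegative) sums then forces `|bᵢ| ≤ 1`. In this box of `5 · 3⁶` points the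
27 lines and the 72 roots are found, and the count checked, by evaluation.
-/

open Finset

lemma Set.ncard_pairs_sub_eq {G : Type*} [AddCommGroup G] (S : Set G) (α : G) :
    {p : G × G | p.1 ∈ S ∧ p.2 ∈ S ∧ p.1 - p.2 = α}.ncard = {l ∈ S | l - α ∈ S}.ncard := by
  have hpairs : {p : G × G | p.1 ∈ S ∧ p.2 ∈ S ∧ p.1 - p.2 = α} =
      (fun l => (l, l - α)) '' {l ∈ S | l - α ∈ S} := by
    ext ⟨l₁, l₂⟩
    simp only [Set.mem_ofPred_eq, Set.mem_image, Prod.mk.injEq]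
    constructor
    · rintro ⟨h₁, h₂, rfl⟩
      exact ⟨l₁, ⟨h₁, by rwa [sub_sub_cancel]⟩, rfl, sub_sub_cancel l₁ l₂⟩
    · rintro ⟨l, ⟨hl, hlα⟩, rfl, rfl⟩
      exact ⟨hl, hlα, sub_sub_cancel l α⟩
  rw [hpairs, Set.ncard_image_of_injective _ fun _ _ h => congrArg Prod.fst h]

lemma Int.mul_add_one_nonneg (t : ℤ) : 0 ≤ t * (t + 1) := by
  rcases le_or_gt 0 t with ht | ht
  · exact mul_nonneg ht (by omega)
  · exact mul_nonneg_of_nonpos_of_nonpos ht.le (by omega)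

lemma Int.mul_sub_one_nonneg (t : ℤ) : 0 ≤ t * (t - 1) := by
  have := Int.mul_add_one_nonneg (-t)
  linarith

namespace CubicSurface

lemma B_comm (x y : Fin 7 → ℤ) : B x y = B y x := by
  simp only [B, mul_comm]

lemma B_sub_left (x y z : Fin 7 → ℤ) : B (x - y) z = B x z - B y z := by
  simp only [B, Pi.sub_apply, sub_mul, sum_sub_distrib]
  ring

lemma B_sub_right (x y z : Fin 7 → ℤ) : B x (y - z) = B x y - B x z := by
  rw [B_comm, B_sub_left, B_comm y, B_comm z]

lemma sub_mem_Lines_iff {l α : Fin 7 → ℤ} (hl : l ∈ Lines) (hα : α ∈ R) :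
    l - α ∈ Lines ↔ B l α = -1 := by
  obtain ⟨hll, hlh⟩ := hl
  obtain ⟨hαα, hαh⟩ := hα
  have hself : B (l - α) (l - α) = -3 - 2 * B l α := by
    rw [B_sub_left, B_sub_right, B_sub_right, B_comm α l]
    linarith
  have hdeg : B (l - α) h = 1 := by
    rw [B_sub_left]
    linarith
  simp only [Lines, Set.mem_ofPred_eq, hself, hdeg, and_true]
  omega

lemma B_self_eq (x : Fin 7 → ℤ) : B x x = x 0 ^ 2 - ∑ i : Fin 6, x i.succ ^ 2 := by
  simp only [B, sq]

lemma B_h_eq (x : Fin 7 → ℤ) : B x h = 3 * x 0 + ∑ i : Fin 6, x i.succ := by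
  simp only [B, h, if_pos, Fin.succ_ne_zero, if_false, mul_neg, mul_one, sum_neg_distrib]
  ring

lemma abs_le_one_of_mul_le {t a : ℤ} (ha : |a| ≤ 2) (hsq : t ^ 2 ≤ a ^ 2 + 2)
    (hpos : t * (t + 1) ≤ (a - 1) * (a - 2)) (hneg : t * (t - 1) ≤ (a + 1) * (a + 2)) :
    |t| ≤ 1 := by
  rw [abs_le] at ha ⊢
  obtain ⟨ha₁, ha₂⟩ := ha
  interval_cases a <;> constructor <;> nlinarith

-- `noncomputable` only because instance search reaches `Preorder ℤ` for `Icc` through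
-- `Int.instConditionallyCompleteLinearOrder`; the kernel still evaluates `box`.
noncomputable def box : Finset (Fin 7 → ℤ) :=
  Fintype.piFinset fun i => if i = 0 then Icc (-2) 2 else Icc (-1) 1

lemma mem_box_of_B_self_eq {x : Fin 7 → ℤ} (hx : B x x = B x h - 2)
    (hdeg : B x h = 0 ∨ B x h = 1) : x ∈ box := by
  set a := x 0
  set b : Fin 6 → ℤ := fun i => x i.succ
  have hd₀ : 0 ≤ B x h := by omega
  have hsq : ∑ i, b i ^ 2 = a ^ 2 + 2 - B x h := by linarith [B_self_eq x]
  have hsum : ∑ i, b i = B x h - 3 * a := by linarith [B_h_eq x]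
  have ha : |a| ≤ 2 := by
    have hcs := sq_sum_le_card_mul_sum_sq (s := univ) (f := b)
    rw [card_univ, Fintype.card_fin, hsq, hsum, Nat.cast_ofNat] at hcs
    rw [abs_le]
    rcases hdeg with hd | hd <;> rw [hd] at hcs <;> constructor <;> nlinarith
  have hle_sum {f : ℤ → ℤ} (hf : ∀ t, 0 ≤ f t) (j : Fin 6) : f (b j) ≤ ∑ i, f (b i) :=
    single_le_sum (fun i _ => hf (b i)) (mem_univ j)
  rw [box, Fintype.mem_piFinset]
  intro i
  induction i using Fin.cases with
  | zero => simpa [abs_le] using ha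
  | succ j =>
    rw [if_neg (Fin.succ_ne_zero j), mem_Icc, ← abs_le]
    refine abs_le_one_of_mul_le ha ?_ ?_ ?_
    · linarith [hle_sum sq_nonneg j]
    · have := hle_sum (f := fun t => t * (t + 1)) Int.mul_add_one_nonneg j
      simp only [mul_add, mul_one, sum_add_distrib, ← sq] at this
      linarith
    · have := hle_sum (f := fun t => t * (t - 1)) Int.mul_sub_one_nonneg j
      simp only [mul_sub, mul_one, sum_sub_distrib, ← sq] at this
      linarith

noncomputable def lineClasses : Finset (Fin 7 → ℤ) :=
  box.filter fun x => B x x = -1 ∧ B x h = 1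

lemma coe_lineClasses : (lineClasses : Set (Fin 7 → ℤ)) = Lines := by
  ext x
  simp only [lineClasses, coe_filter, Lines, Set.mem_ofPred_eq, and_iff_right_iff_imp]
  rintro ⟨hself, hdeg⟩
  exact mem_box_of_B_self_eq (by omega) (by omega)

set_option maxRecDepth 100000 in
lemma card_lineClasses_filter_B_eq_neg_one_of_mem_box :
    ∀ α ∈ box, B α α = -2 → B α h = 0 → #{l ∈ lineClasses | B l α = -1} = 6 := by
  decide

lemma card_lineClasses_filter_B_eq_neg_one {α : Fin 7 → ℤ} (hα : α ∈ R) :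
    #{l ∈ lineClasses | B l α = -1} = 6 :=
  card_lineClasses_filter_B_eq_neg_one_of_mem_box α
    (mem_box_of_B_self_eq (by linarith [hα.1, hα.2]) (Or.inl hα.2)) hα.1 hα.2

end CubicSurface

open CubicSurface

/-- Every root can be written as the difference of two line classes in exactly 6 ways. -/
theorem root_eq_diff_of_lines_in_six_ways :
    ∀ α ∈ R,
      {p : (Fin 7 → ℤ) × (Fin 7 → ℤ) |
        p.1 ∈ Lines ∧ p.2 ∈ Lines ∧ p.1 - p.2 = α}.ncard = 6 := by
  intro α hα
  have hskew : {l ∈ Lines | l - α ∈ Lines} = ↑{l ∈ lineClasses | B l α = -1} := by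
    ext l
    rw [Set.mem_ofPred_eq, coe_filter, Set.mem_ofPred_eq, ← mem_coe, coe_lineClasses]
    exact and_congr_right fun hl => sub_mem_Lines_iff hl hα
  rw [Set.ncard_pairs_sub_eq, hskew, Set.ncard_coe_finset,
    card_lineClasses_filter_B_eq_neg_one hα]
end

section
/- The ℤ-submodule of L spanned by the root system R is exactly the orthogonal complement h^⊥ = {x ∈ L : B(x,h) = 0}. (The lattice-theoretic instance of Proposition 3.4: the set of all primitive vanishing cycles generates a sublattice of full rank in the vanishing cohomology.) -/
/-- The root `β = e₀ - e₁ - e₂ - e₃`. -/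
def rβ : Fin 7 → ℤ := fun j => if j.val = 0 then 1 else if j.val ≤ 3 then -1 else 0

/-- The roots `α_k = e_{k+1} - e_{k+2}`. -/
def rα (k : ℕ) : Fin 7 → ℤ := fun j => if j.val = k + 1 then 1 else if j.val = k + 2 then -1 else 0

lemma rβ_mem : rβ ∈ R := by constructor <;> decide

lemma rα_mem (k : ℕ) (hk : k < 5) : rα k ∈ R := by
  interval_cases k <;> constructor <;> decide

/-- The ℤ-span of the root system `R` is exactly the orthogonal complement `h^⊥`. -/
theorem span_R_eq_h_perp :
    (Submodule.span ℤ R : Set (Fin 7 → ℤ)) = {x | B x h = 0} := by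
  apply Set.Subset.antisymm
  · intro x hx
    induction hx using Submodule.span_induction with
    | mem y hy => exact hy.2
    | zero => simp [B]
    | add y z hy hz hy' hz' =>
      simp only [Set.mem_setOf_eq, B] at *
      simp only [Pi.add_apply, add_mul, Finset.sum_add_distrib] at *
      linarith
    | smul c y hy hy' =>
      simp only [Set.mem_setOf_eq, B] at *
      simp only [Pi.smul_apply, smul_eq_mul, mul_assoc, ← Finset.mul_sum] at *
      rw [← mul_sub, hy', mul_zero]
  · intro x hx
    have hx' : 3 * x 0 + (x 1 + x 2 + x 3 + x 4 + x 5 + x 6) = 0 := by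
      simp only [Set.mem_setOf_eq, B, h, Fin.sum_univ_six,
        show (Fin.succ 2 : Fin 7) = 3 from rfl, show (Fin.succ 3 : Fin 7) = 4 from rfl,
        show (Fin.succ 4 : Fin 7) = 5 from rfl, show (Fin.succ 5 : Fin 7) = 6 from rfl] at hx
      norm_num [Fin.ext_iff, show (((3:Fin 7)):ℕ) = 3 from rfl, show (((4:Fin 7)):ℕ) = 4 from rfl,
        show (((5:Fin 7)):ℕ) = 5 from rfl, show (((6:Fin 7)):ℕ) = 6 from rfl] at hx
      linarith
    have hdec : x = (x 0) • rβ + (x 1 + x 0) • rα 0 + (x 1 + x 2 + 2 * x 0) • rα 1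
        + (x 1 + x 2 + x 3 + 3 * x 0) • rα 2 + (x 1 + x 2 + x 3 + x 4 + 3 * x 0) • rα 3
        + (x 1 + x 2 + x 3 + x 4 + x 5 + 3 * x 0) • rα 4 := by
      funext j
      fin_cases j <;>
        · simp only [Pi.add_apply, Pi.smul_apply, smul_eq_mul, rβ, rα,
            show ((⟨2, by omega⟩ : Fin 7)) = 2 from rfl, show ((⟨3, by omega⟩ : Fin 7)) = 3 from rfl,
            show ((⟨4, by omega⟩ : Fin 7)) = 4 from rfl, show ((⟨5, by omega⟩ : Fin 7)) = 5 from rfl,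
            show ((⟨6, by omega⟩ : Fin 7)) = 6 from rfl,
            show (((2:Fin 7)):ℕ) = 2 from rfl, show (((3:Fin 7)):ℕ) = 3 from rfl,
            show (((4:Fin 7)):ℕ) = 4 from rfl, show (((5:Fin 7)):ℕ) = 5 from rfl,
            show (((6:Fin 7)):ℕ) = 6 from rfl, show (((1:Fin 7)):ℕ) = 1 from rfl,
            show (((0:Fin 7)):ℕ) = 0 from rfl]
          norm_num
          try linarith
    rw [hdec]
    have hb := Submodule.subset_span (R := ℤ) rβ_mem
    have ha : ∀ k, k < 5 → rα k ∈ Submodule.span ℤ R :=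
      fun k hk => Submodule.subset_span (rα_mem k hk)
    exact Submodule.add_mem _ (Submodule.add_mem _ (Submodule.add_mem _ (Submodule.add_mem _
      (Submodule.add_mem _ (Submodule.smul_mem _ _ hb)
        (Submodule.smul_mem _ _ (ha 0 (by norm_num))))
      (Submodule.smul_mem _ _ (ha 1 (by norm_num)))) (Submodule.smul_mem _ _ (ha 2 (by norm_num))))
      (Submodule.smul_mem _ _ (ha 3 (by norm_num)))) (Submodule.smul_mem _ _ (ha 4 (by norm_num)))
end

section
/- The six vectors α₁ = e₀ - e₁ - e₂ - e₃ and αᵢ = e_{i-1} - eᵢ for 2 ≤ i ≤ 6 all belong to the root system R, and they form a ℤ-basis of the orthogonal complement h^⊥ = {x ∈ L : B(x,h) = 0}. (The simple roots of the E6 lattice h^⊥ inside Pic(S) ≅ I^{1,6}.) -/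
def simpleRoot : Fin 6 → (Fin 7 → ℤ) :=
  ![e 0 - e 1 - e 2 - e 3, e 1 - e 2, e 2 - e 3, e 3 - e 4, e 4 - e 5, e 5 - e 6]

lemma sr_eq : simpleRoot = fun i j =>
    if i.val = 0 then (if j.val = 0 then 1 else if j.val ≤ 3 then -1 else 0)
    else (if j.val = i.val then 1 else if j.val = i.val + 1 then -1 else 0) := by decide

@[simp] lemma val6_0 : ((0:Fin 6):ℕ) = 0 := rfl
@[simp] lemma val6_1 : ((1:Fin 6):ℕ) = 1 := rfl
@[simp] lemma val6_2 : ((2:Fin 6):ℕ) = 2 := rfl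
@[simp] lemma val6_3 : ((3:Fin 6):ℕ) = 3 := rfl
@[simp] lemma val6_4 : ((4:Fin 6):ℕ) = 4 := rfl
@[simp] lemma val6_5 : ((5:Fin 6):ℕ) = 5 := rfl
@[simp] lemma val7_0 : ((0:Fin 7):ℕ) = 0 := rfl
@[simp] lemma val7_1 : ((1:Fin 7):ℕ) = 1 := rfl
@[simp] lemma val7_2 : ((2:Fin 7):ℕ) = 2 := rfl
@[simp] lemma val7_3 : ((3:Fin 7):ℕ) = 3 := rfl
@[simp] lemma val7_4 : ((4:Fin 7):ℕ) = 4 := rfl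
@[simp] lemma val7_5 : ((5:Fin 7):ℕ) = 5 := rfl
@[simp] lemma val7_6 : ((6:Fin 7):ℕ) = 6 := rfl
@[simp] lemma succ6_0 : Fin.succ (0:Fin 6) = (1:Fin 7) := rfl
@[simp] lemma succ6_1 : Fin.succ (1:Fin 6) = (2:Fin 7) := rfl
@[simp] lemma succ6_2 : Fin.succ (2:Fin 6) = (3:Fin 7) := rfl
@[simp] lemma succ6_3 : Fin.succ (3:Fin 6) = (4:Fin 7) := rfl
@[simp] lemma succ6_4 : Fin.succ (4:Fin 6) = (5:Fin 7) := rfl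
@[simp] lemma succ6_5 : Fin.succ (5:Fin 6) = (6:Fin 7) := rfl
@[simp] lemma mk7_0 (hk : 0 < 7) : (⟨0, hk⟩ : Fin 7) = (0:Fin 7) := rfl
@[simp] lemma mk7_1 (hk : 1 < 7) : (⟨1, hk⟩ : Fin 7) = (1:Fin 7) := rfl
@[simp] lemma mk7_2 (hk : 2 < 7) : (⟨2, hk⟩ : Fin 7) = (2:Fin 7) := rfl
@[simp] lemma mk7_3 (hk : 3 < 7) : (⟨3, hk⟩ : Fin 7) = (3:Fin 7) := rfl
@[simp] lemma mk7_4 (hk : 4 < 7) : (⟨4, hk⟩ : Fin 7) = (4:Fin 7) := rfl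
@[simp] lemma mk7_5 (hk : 5 < 7) : (⟨5, hk⟩ : Fin 7) = (5:Fin 7) := rfl
@[simp] lemma mk7_6 (hk : 6 < 7) : (⟨6, hk⟩ : Fin 7) = (6:Fin 7) := rfl

/-- The six simple roots all lie in `R` and form a ℤ-basis of `h^⊥`. -/
theorem simpleRoots_basis_of_h_perp :
    (∀ i, simpleRoot i ∈ R) ∧ LinearIndependent ℤ simpleRoot ∧
      (Submodule.span ℤ (Set.range simpleRoot) : Set (Fin 7 → ℤ)) = {x | B x h = 0} := by
  refine ⟨?_, ?_, ?_⟩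
  · intro i
    fin_cases i <;> exact ⟨by decide, by decide⟩
  · rw [Fintype.linearIndependent_iff]
    intro g hg
    have h0 := congrFun hg 0
    have h1 := congrFun hg 1
    have h2 := congrFun hg 2
    have h4 := congrFun hg 4
    have h5 := congrFun hg 5
    have h6 := congrFun hg 6
    simp [sr_eq, Fin.sum_univ_six] at h0 h1 h2 h4 h5 h6
    intro i
    fin_cases i <;> simp <;> omega
  · ext x
    simp only [Set.mem_setOf_eq, SetLike.mem_coe, Submodule.mem_span_range_iff_exists_fun]
    have hBh : ∀ y : Fin 7 → ℤ, B y h = 3 * y 0 + y 1 + y 2 + y 3 + y 4 + y 5 + y 6 := by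
      intro y
      simp [B, h, Fin.sum_univ_six]
      ring
    constructor
    · rintro ⟨c, rfl⟩
      rw [hBh]
      simp [sr_eq, Fin.sum_univ_six]
      ring
    · intro hx
      rw [hBh] at hx
      refine ⟨fun i => if i.val = 0 then x 0 else if i.val = 1 then x 0 + x 1
        else if i.val = 2 then 2*x 0 + x 1 + x 2
        else if i.val = 3 then 3*x 0 + x 1 + x 2 + x 3
        else if i.val = 4 then 3*x 0 + x 1 + x 2 + x 3 + x 4
        else 3*x 0 + x 1 + x 2 + x 3 + x 4 + x 5, ?_⟩
      funext j
      fin_cases j <;> simp [sr_eq, Fin.sum_univ_six] <;> omega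
end

section
/- For every root δ ∈ R, the number of orbits of the subgroup generated by the single reflection r_δ acting on the 72-element set R is exactly 51. (The paper's Example computation: a cubic surface hyperplane section with a single A₁ singularity has |PV| = |R(X₀)| = 51 limiting primitive vanishing cycles; the A₁ row of Table 1.) -/
/-- The reflection `r_α(β) = β + B(β,α)·α` in a root `α`. -/
def reflect (α β : Fin 7 → ℤ) : Fin 7 → ℤ := β + B β α • α

/-! ### Auxiliary machinery -/

/-- Explicit form of the intersection form. -/
def Bex (x y : Fin 7 → ℤ) : ℤ :=
  x 0 * y 0 - (x 1 * y 1 + x 2 * y 2 + x 3 * y 3 + x 4 * y 4 + x 5 * y 5 + x 6 * y 6)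

lemma B_eq (x y : Fin 7 → ℤ) : B x y = Bex x y := by
  show _ - _ = _
  rw [Fin.sum_univ_six]
  rfl

lemma h_app0 : h 0 = 3 := rfl
lemma h_app1 : h 1 = -1 := rfl
lemma h_app2 : h 2 = -1 := rfl
lemma h_app3 : h 3 = -1 := rfl
lemma h_app4 : h 4 = -1 := rfl
lemma h_app5 : h 5 = -1 := rfl
lemma h_app6 : h 6 = -1 := rfl

lemma Bh_eq (x : Fin 7 → ℤ) :
    B x h = 3 * x 0 + (x 1 + x 2 + x 3 + x 4 + x 5 + x 6) := by
  rw [B_eq, Bex, h_app0, h_app1, h_app2, h_app3, h_app4, h_app5, h_app6]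
  ring

/-- Encoding of the 72 roots in base 5 (digit `i` is coordinate `i` plus 2). -/
def encList : List ℕ := [19534, 19688, 20188, 20288, 20308, 22688, 22788, 22808, 23288, 23308, 23408, 23442, 23462, 23562, 24062, 26562, 35188, 35288, 35308, 35788, 35808, 35908, 35942, 35962, 36062, 36562, 38288, 38308, 38408, 38442, 38462, 38562, 38908, 38942, 38962, 39042, 39082, 39162, 39182, 39216, 39562, 39662, 39682, 39716, 39816, 39836, 41562, 42062, 42162, 42182, 42216, 42316, 42336, 42816, 42836, 42936, 51562, 54062, 54562, 54662, 54682, 54716, 54816, 54836, 55316, 55336, 55436, 57816, 57836, 57936, 58436, 58590]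

/-- Decode a natural number to a vector via base-5 digits shifted by `-2`. -/
def decode (n : ℕ) : Fin 7 → ℤ := fun i => ((n / 5 ^ (i : ℕ)) % 5 : ℕ) - 2

def Rlist : List (Fin 7 → ℤ) := encList.map decode

def Rfin : Finset (Fin 7 → ℤ) := Rlist.toFinset

def tst (a0 a1 a2 a3 a4 a5 a6 : ℕ) : Bool :=
  let x0 : ℤ := (a0:ℤ) - 2; let x1 : ℤ := (a1:ℤ) - 2; let x2 : ℤ := (a2:ℤ) - 2;
  let x3 : ℤ := (a3:ℤ) - 2; let x4 : ℤ := (a4:ℤ) - 2; let x5 : ℤ := (a5:ℤ) - 2;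
  let x6 : ℤ := (a6:ℤ) - 2
  !(decide (x0*x0 - (x1*x1 + x2*x2 + x3*x3 + x4*x4 + x5*x5 + x6*x6) = -2 ∧
      3*x0 + (x1 + x2 + x3 + x4 + x5 + x6) = 0)) ||
  decide ((a0 + 5*a1 + 25*a2 + 125*a3 + 625*a4 + 3125*a5 + 15625*a6) ∈ encList)

def chk : Bool := (List.range 5).all fun a0 => (List.range 5).all fun a1 =>
  (List.range 5).all fun a2 => (List.range 5).all fun a3 => (List.range 5).all fun a4 =>
  (List.range 5).all fun a5 => (List.range 5).all fun a6 => tst a0 a1 a2 a3 a4 a5 a6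

set_option maxHeartbeats 8000000 in
theorem chk_true : chk = true := by decide

/-! ### Enumeration of the root system -/

lemma bounds {α : Fin 7 → ℤ} (hα : α ∈ R) : ∀ i, -2 ≤ α i ∧ α i ≤ 2 := by
  obtain ⟨h1, h2⟩ := hα
  rw [B_eq] at h1
  rw [Bh_eq] at h2
  unfold Bex at h1
  have id15 : (α 1 - α 2)^2 + (α 1 - α 3)^2 + (α 1 - α 4)^2 + (α 1 - α 5)^2 + (α 1 - α 6)^2
      + (α 2 - α 3)^2 + (α 2 - α 4)^2 + (α 2 - α 5)^2 + (α 2 - α 6)^2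
      + (α 3 - α 4)^2 + (α 3 - α 5)^2 + (α 3 - α 6)^2
      + (α 4 - α 5)^2 + (α 4 - α 6)^2 + (α 5 - α 6)^2 = 12 - 3 * (α 0 * α 0) := by
    linear_combination (-6 : ℤ) * h1 + (3 * α 0 - (α 1 + α 2 + α 3 + α 4 + α 5 + α 6)) * h2
  have h0sq : α 0 * α 0 ≤ 4 := by
    linarith [sq_nonneg (α 1 - α 2), sq_nonneg (α 1 - α 3), sq_nonneg (α 1 - α 4),
      sq_nonneg (α 1 - α 5), sq_nonneg (α 1 - α 6), sq_nonneg (α 2 - α 3),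
      sq_nonneg (α 2 - α 4), sq_nonneg (α 2 - α 5), sq_nonneg (α 2 - α 6),
      sq_nonneg (α 3 - α 4), sq_nonneg (α 3 - α 5), sq_nonneg (α 3 - α 6),
      sq_nonneg (α 4 - α 5), sq_nonneg (α 4 - α 6), sq_nonneg (α 5 - α 6), id15]
  have key : ∀ x : ℤ, x * x ≤ 6 → -2 ≤ x ∧ x ≤ 2 := by
    intro x hx
    have l : -15 ≤ 6 * x := by nlinarith [mul_self_nonneg (x + 3)]
    have r : 6 * x ≤ 15 := by nlinarith [mul_self_nonneg (x - 3)]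
    omega
  have ns := fun j : Fin 7 => mul_self_nonneg (α j)
  have q0 : α 0 * α 0 ≤ 6 := by linarith [h0sq]
  have q1 : α 1 * α 1 ≤ 6 := by linarith [ns 2, ns 3, ns 4, ns 5, ns 6]
  have q2 : α 2 * α 2 ≤ 6 := by linarith [ns 1, ns 3, ns 4, ns 5, ns 6]
  have q3 : α 3 * α 3 ≤ 6 := by linarith [ns 1, ns 2, ns 4, ns 5, ns 6]
  have q4 : α 4 * α 4 ≤ 6 := by linarith [ns 1, ns 2, ns 3, ns 5, ns 6]
  have q5 : α 5 * α 5 ≤ 6 := by linarith [ns 1, ns 2, ns 3, ns 4, ns 6]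
  have q6 : α 6 * α 6 ≤ 6 := by linarith [ns 1, ns 2, ns 3, ns 4, ns 5]
  intro i
  apply key
  fin_cases i
  · exact q0
  · exact q1
  · exact q2
  · exact q3
  · exact q4
  · exact q5
  · exact q6

lemma digit_extract (d0 d1 d2 d3 d4 d5 d6 : ℕ) (l0 : d0 < 5) (l1 : d1 < 5)
    (l2 : d2 < 5) (l3 : d3 < 5) (l4 : d4 < 5) (l5 : d5 < 5) (l6 : d6 < 5) :
    (d0 + 5*d1 + 25*d2 + 125*d3 + 625*d4 + 3125*d5 + 15625*d6) / 1 % 5 = d0 ∧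
    (d0 + 5*d1 + 25*d2 + 125*d3 + 625*d4 + 3125*d5 + 15625*d6) / 5 % 5 = d1 ∧
    (d0 + 5*d1 + 25*d2 + 125*d3 + 625*d4 + 3125*d5 + 15625*d6) / 25 % 5 = d2 ∧
    (d0 + 5*d1 + 25*d2 + 125*d3 + 625*d4 + 3125*d5 + 15625*d6) / 125 % 5 = d3 ∧
    (d0 + 5*d1 + 25*d2 + 125*d3 + 625*d4 + 3125*d5 + 15625*d6) / 625 % 5 = d4 ∧
    (d0 + 5*d1 + 25*d2 + 125*d3 + 625*d4 + 3125*d5 + 15625*d6) / 3125 % 5 = d5 ∧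
    (d0 + 5*d1 + 25*d2 + 125*d3 + 625*d4 + 3125*d5 + 15625*d6) / 15625 % 5 = d6 := by
  refine ⟨by omega, by omega, by omega, by omega, by omega, by omega, by omega⟩

lemma mem_Rfin_of_mem_R {α : Fin 7 → ℤ} (hα : α ∈ R) : α ∈ Rfin := by
  have hb := bounds hα
  obtain ⟨h1, h2⟩ := hα
  rw [B_eq] at h1; rw [Bh_eq] at h2
  unfold Bex at h1
  set d : Fin 7 → ℕ := fun i => (α i + 2).toNat with hd
  have hdval : ∀ i, (d i : ℤ) = α i + 2 := by
    intro i
    simp only [hd]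
    have := (hb i).1
    omega
  have hdlt : ∀ i, d i < 5 := by
    intro i
    have := (hb i).2
    have := hdval i
    omega
  have H := chk_true
  unfold chk at H
  simp only [List.all_eq_true, List.mem_range] at H
  have Ht := H _ (hdlt 0) _ (hdlt 1) _ (hdlt 2) _ (hdlt 3) _ (hdlt 4) _ (hdlt 5) _ (hdlt 6)
  unfold tst at Ht
  simp only [Bool.or_eq_true, Bool.not_eq_true', decide_eq_true_eq,
    decide_eq_false_iff_not] at Ht
  have hcond : ((d 0 : ℤ) - 2) * ((d 0 : ℤ) - 2) -
      (((d 1 : ℤ) - 2) * ((d 1 : ℤ) - 2) + ((d 2 : ℤ) - 2) * ((d 2 : ℤ) - 2) +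
       ((d 3 : ℤ) - 2) * ((d 3 : ℤ) - 2) + ((d 4 : ℤ) - 2) * ((d 4 : ℤ) - 2) +
       ((d 5 : ℤ) - 2) * ((d 5 : ℤ) - 2) + ((d 6 : ℤ) - 2) * ((d 6 : ℤ) - 2)) = -2 ∧
      3 * ((d 0 : ℤ) - 2) + (((d 1 : ℤ) - 2) + ((d 2 : ℤ) - 2) + ((d 3 : ℤ) - 2) +
       ((d 4 : ℤ) - 2) + ((d 5 : ℤ) - 2) + ((d 6 : ℤ) - 2)) = 0 := by
    rw [hdval 0, hdval 1, hdval 2, hdval 3, hdval 4, hdval 5, hdval 6]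
    constructor
    · linear_combination h1
    · linear_combination h2
  rcases Ht with Ht | Ht
  · exact absurd hcond Ht
  · have hdec : decode (d 0 + 5*d 1 + 25*d 2 + 125*d 3 + 625*d 4 + 3125*d 5 + 15625*d 6)
        = α := by
      funext i
      have e0 := hdval 0; have e1 := hdval 1; have e2 := hdval 2; have e3 := hdval 3
      have e4 := hdval 4; have e5 := hdval 5; have e6 := hdval 6
      have l0 := hdlt 0; have l1 := hdlt 1; have l2 := hdlt 2; have l3 := hdlt 3
      have l4 := hdlt 4; have l5 := hdlt 5; have l6 := hdlt 6
      obtain ⟨hE0, hE1, hE2, hE3, hE4, hE5, hE6⟩ :=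
        digit_extract (d 0) (d 1) (d 2) (d 3) (d 4) (d 5) (d 6)
          (hdlt 0) (hdlt 1) (hdlt 2) (hdlt 3) (hdlt 4) (hdlt 5) (hdlt 6)
      fin_cases i
      · show (((d 0 + 5*d 1 + 25*d 2 + 125*d 3 + 625*d 4 + 3125*d 5 + 15625*d 6) / 1 % 5 : ℕ) : ℤ) - 2 = α 0
        rw [hE0]
        omega
      · show (((d 0 + 5*d 1 + 25*d 2 + 125*d 3 + 625*d 4 + 3125*d 5 + 15625*d 6) / 5 % 5 : ℕ) : ℤ) - 2 = α 1
        rw [hE1]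
        omega
      · show (((d 0 + 5*d 1 + 25*d 2 + 125*d 3 + 625*d 4 + 3125*d 5 + 15625*d 6) / 25 % 5 : ℕ) : ℤ) - 2 = α 2
        rw [hE2]
        omega
      · show (((d 0 + 5*d 1 + 25*d 2 + 125*d 3 + 625*d 4 + 3125*d 5 + 15625*d 6) / 125 % 5 : ℕ) : ℤ) - 2 = α 3
        rw [hE3]
        omega
      · show (((d 0 + 5*d 1 + 25*d 2 + 125*d 3 + 625*d 4 + 3125*d 5 + 15625*d 6) / 625 % 5 : ℕ) : ℤ) - 2 = α 4
        rw [hE4]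
        omega
      · show (((d 0 + 5*d 1 + 25*d 2 + 125*d 3 + 625*d 4 + 3125*d 5 + 15625*d 6) / 3125 % 5 : ℕ) : ℤ) - 2 = α 5
        rw [hE5]
        omega
      · show (((d 0 + 5*d 1 + 25*d 2 + 125*d 3 + 625*d 4 + 3125*d 5 + 15625*d 6) / 15625 % 5 : ℕ) : ℤ) - 2 = α 6
        rw [hE6]
        omega
    rw [← hdec]
    unfold Rfin
    rw [List.mem_toFinset]
    unfold Rlist
    exact List.mem_map.mpr ⟨_, Ht, rfl⟩

lemma mem_R_of_mem_Rfin {α : Fin 7 → ℤ} (hα : α ∈ Rfin) : α ∈ R := by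
  have key : ∀ x ∈ Rlist, Bex x x = -2 ∧
      3 * x 0 + (x 1 + x 2 + x 3 + x 4 + x 5 + x 6) = 0 := by decide
  unfold Rfin at hα
  rw [List.mem_toFinset] at hα
  obtain ⟨k1, k2⟩ := key α hα
  exact ⟨by rw [B_eq]; exact k1, by rw [Bh_eq]; exact k2⟩

lemma R_eq_Rfin : R = ↑Rfin := by
  ext α
  exact ⟨fun hα => mem_Rfin_of_mem_R hα, fun hα => mem_R_of_mem_Rfin hα⟩

/-! ### Counting facts (by `decide`) -/

lemma Rfin_card : Rfin.card = 72 := by decide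

lemma fix_count : ∀ δ ∈ Rfin, (Rfin.filter fun β => Bex β δ = 0).card = 30 := by decide

/-! ### Algebraic properties of reflections -/

lemma Bex_add_smul_left (x y z : Fin 7 → ℤ) (c : ℤ) :
    Bex (x + c • y) z = Bex x z + c * Bex y z := by
  simp only [Bex, Pi.add_apply, Pi.smul_apply, smul_eq_mul]
  ring

lemma Bex_add_smul_right (z x y : Fin 7 → ℤ) (c : ℤ) :
    Bex z (x + c • y) = Bex z x + c * Bex z y := by
  simp only [Bex, Pi.add_apply, Pi.smul_apply, smul_eq_mul]
  ring

lemma Bex_symm (x y : Fin 7 → ℤ) : Bex x y = Bex y x := by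
  simp only [Bex]; ring

lemma Bh_add_smul (x y : Fin 7 → ℤ) (c : ℤ) :
    B (x + c • y) h = B x h + c * B y h := by
  simp only [Bh_eq, Pi.add_apply, Pi.smul_apply, smul_eq_mul]
  ring

lemma reflect_reflect {δ : Fin 7 → ℤ} (hδ : B δ δ = -2) (β : Fin 7 → ℤ) :
    reflect δ (reflect δ β) = β := by
  unfold reflect
  rw [B_eq] at hδ ⊢
  rw [B_eq, Bex_add_smul_left, hδ]
  funext i
  simp only [Pi.add_apply, Pi.smul_apply, smul_eq_mul]
  ring

lemma reflect_mem_R {δ : Fin 7 → ℤ} (hδ : δ ∈ R) {β : Fin 7 → ℤ} (hβ : β ∈ R) :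
    reflect δ β ∈ R := by
  obtain ⟨hδ1, hδ2⟩ := hδ
  obtain ⟨hβ1, hβ2⟩ := hβ
  rw [B_eq] at hδ1 hβ1
  constructor
  · show B (β + B β δ • δ) (β + B β δ • δ) = -2
    rw [B_eq, B_eq, Bex_add_smul_left, Bex_add_smul_right, Bex_add_smul_right,
      hδ1, hβ1, Bex_symm δ β]
    ring
  · show B (β + B β δ • δ) h = 0
    rw [Bh_add_smul, hβ2, hδ2]
    ring

lemma reflect_fixed_iff {δ : Fin 7 → ℤ} (hδ : B δ δ = -2) (β : Fin 7 → ℤ) :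
    reflect δ β = β ↔ B β δ = 0 := by
  constructor
  · intro hfix
    have h0 : B β δ • δ = 0 := by
      have : β + B β δ • δ = β := hfix
      have := congrArg (fun v => v - β) this
      simpa [add_sub_cancel_left] using this
    by_contra hne
    have hδ0 : δ = 0 := by
      funext j
      have hj := congrFun h0 j
      simp only [Pi.smul_apply, smul_eq_mul, Pi.zero_apply] at hj
      rcases mul_eq_zero.mp hj with hc | hc
      · exact absurd hc hne
      · simpa using hc
    rw [hδ0] at hδ
    rw [B_eq] at hδ
    simp [Bex] at hδ
  · intro h0
    unfold reflect
    rw [h0, zero_smul, add_zero]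

/-! ### The subgroup generated by an involution -/

lemma orbit_closure_eq {X : Type*} (g : Equiv.Perm X) (hg2 : g * g = 1) (β : X) :
    MulAction.orbit (Subgroup.closure {g} : Subgroup (Equiv.Perm X)) β = {β, g β} := by
  have hz2 : g ^ (2:ℤ) = 1 := by
    rw [show (2:ℤ) = 1 + 1 from rfl, zpow_add, zpow_one, hg2]
  have pow2 : ∀ m : ℤ, g ^ m = 1 ∨ g ^ m = g := by
    intro m
    rcases Int.even_or_odd m with ⟨k, hk⟩ | ⟨k, hk⟩
    · left
      rw [hk, ← two_mul, zpow_mul, hz2, one_zpow]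
    · right
      rw [hk, zpow_add, zpow_mul, hz2, one_zpow, one_mul, zpow_one]
  ext x
  constructor
  · rintro ⟨⟨u, hu⟩, rfl⟩
    obtain ⟨n, rfl⟩ := Subgroup.mem_closure_singleton.mp hu
    show (g ^ n) β ∈ ({β, g β} : Set X)
    rcases pow2 n with hn | hn <;> rw [hn]
    · left; rfl
    · right; rfl
  · rintro (rfl | hx)
    · exact ⟨1, one_smul _ _⟩
    · rw [Set.mem_singleton_iff] at hx
      exact ⟨⟨g, Subgroup.subset_closure (Set.mem_singleton g)⟩, hx.symm⟩

/-! ### Generic orbit counting for an involution on a finite set -/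

lemma count_lemma {X : Type*} [DecidableEq X] (S : Finset X) (σ : X → X)
    (hinv : ∀ x, σ (σ x) = x) (hmap : ∀ x ∈ S, σ x ∈ S)
    (hS : S.card = 72) (hfix : (S.filter fun x => σ x = x).card = 30) :
    (S.image fun x => ({x, σ x} : Finset X)).card = 51 := by
  classical
  set F : X → Finset X := fun x => {x, σ x} with hF
  set Fix := S.filter fun x => σ x = x with hFixd
  set Mov := S.filter fun x => ¬ σ x = x with hMovd
  have hMovcard : Mov.card = 42 := by
    have := Finset.card_filter_add_card_filter_not (s := S) (p := fun x => σ x = x)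
    rw [← hFixd, ← hMovd] at this
    omega
  have hsingle : ∀ x, σ x = x → F x = {x} := by
    intro x hx
    simp [hF, hx]
  have hpair : ∀ x, F x = {x, σ x} := fun _ => rfl
  have hsplit : S.image F = Fix.image F ∪ Mov.image F := by
    rw [← Finset.image_union, Finset.filter_union_filter_not_eq]
  have hdisj : Disjoint (Fix.image F) (Mov.image F) := by
    rw [Finset.disjoint_left]
    rintro t ht1 ht2
    obtain ⟨x, hx, rfl⟩ := Finset.mem_image.mp ht1
    obtain ⟨y, hy, hFy⟩ := Finset.mem_image.mp ht2
    have hxfix : σ x = x := (Finset.mem_filter.mp hx).2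
    have hymov : ¬ σ y = y := (Finset.mem_filter.mp hy).2
    have h1 : y ∈ F x := by rw [← hFy]; exact Finset.mem_insert_self _ _
    have h2 : σ y ∈ F x := by
      rw [← hFy, hpair]
      exact Finset.mem_insert_of_mem (Finset.mem_singleton_self _)
    rw [hsingle x hxfix, Finset.mem_singleton] at h1 h2
    exact hymov (h2.trans h1.symm)
  have hfiximg : (Fix.image F).card = 30 := by
    rw [Finset.card_image_of_injOn]
    · exact hfix
    · intro x hx y hy hxy
      have hx' : σ x = x := (Finset.mem_filter.mp hx).2
      have hy' : σ y = y := (Finset.mem_filter.mp hy).2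
      have heq : ({x} : Finset X) = {y} := by
        rw [← hsingle x hx', ← hsingle y hy']; exact hxy
      exact Finset.singleton_injective heq
  have hmovimg : Mov.card = 2 * (Mov.image F).card := by
    rw [Finset.card_eq_sum_card_image F Mov]
    rw [Finset.sum_congr rfl (g := fun _ => 2) (fun t ht => ?_), Finset.sum_const,
      smul_eq_mul, mul_comm]
    obtain ⟨x, hx, rfl⟩ := Finset.mem_image.mp ht
    have hxS : x ∈ S := (Finset.mem_filter.mp hx).1
    have hxmov : ¬ σ x = x := (Finset.mem_filter.mp hx).2
    have hfiber : Mov.filter (fun y => F y = F x) = {x, σ x} := by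
      ext y
      constructor
      · intro hy
        obtain ⟨hyM, hFeq⟩ := Finset.mem_filter.mp hy
        have hyin : y ∈ F x := by rw [← hFeq, hpair]; exact Finset.mem_insert_self _ _
        rw [hpair] at hyin
        exact hyin
      · intro hy
        rw [Finset.mem_insert, Finset.mem_singleton] at hy
        rcases hy with rfl | rfl
        · exact Finset.mem_filter.mpr ⟨hx, rfl⟩
        · refine Finset.mem_filter.mpr ⟨?_, ?_⟩
          · refine Finset.mem_filter.mpr ⟨hmap x hxS, ?_⟩
            rw [hinv x]
            intro hcon
            exact hxmov hcon.symm
          · rw [hpair, hpair, hinv x, Finset.pair_comm]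
    rw [hfiber, Finset.card_insert_of_notMem, Finset.card_singleton]
    rw [Finset.mem_singleton]
    intro hcon
    exact hxmov hcon.symm
  have h21 : (Mov.image F).card = 21 := by
    rw [hMovcard] at hmovimg
    omega
  rw [hsplit, Finset.card_union_of_disjoint hdisj, hfiximg, h21]

/-! ### Main theorem -/

/-- For a single root `δ` (the vanishing cycle of an `A₁`-degeneration), the subgroup
generated by the reflection `r_δ` has exactly 51 orbits on the 72-element root system. -/
theorem orbits_A1 (δ : Fin 7 → ℤ) (hδ : δ ∈ R)
    (g : Equiv.Perm (Fin 7 → ℤ)) (hg : ∀ β, g β = reflect δ β) :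
    {O : Set (Fin 7 → ℤ) | ∃ β ∈ R,
      O = MulAction.orbit (Subgroup.closure {g} : Subgroup (Equiv.Perm (Fin 7 → ℤ))) β}.ncard
      = 51 := by
  classical
  have hδδ : B δ δ = -2 := hδ.1
  have hδfin : δ ∈ Rfin := mem_Rfin_of_mem_R hδ
  have hg2 : g * g = 1 := by
    apply Equiv.ext
    intro β
    rw [Equiv.Perm.mul_apply, Equiv.Perm.one_apply, hg, hg]
    exact reflect_reflect hδδ β
  set σ : (Fin 7 → ℤ) → (Fin 7 → ℤ) := fun β => reflect δ β with hσ
  have horbit : ∀ β, MulAction.orbit (Subgroup.closure {g} : Subgroup (Equiv.Perm (Fin 7 → ℤ))) β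
      = ({β, σ β} : Set (Fin 7 → ℤ)) := by
    intro β
    rw [orbit_closure_eq g hg2 β, hg]
  set F : (Fin 7 → ℤ) → Finset (Fin 7 → ℤ) := fun β => {β, σ β} with hF
  have hcoe : ∀ β, (↑(F β) : Set (Fin 7 → ℤ)) = ({β, σ β} : Set (Fin 7 → ℤ)) := by
    intro β
    simp [hF]
  have hset : {O : Set (Fin 7 → ℤ) | ∃ β ∈ R,
      O = MulAction.orbit (Subgroup.closure {g} : Subgroup (Equiv.Perm (Fin 7 → ℤ))) β}
      = ((↑·) : Finset (Fin 7 → ℤ) → Set (Fin 7 → ℤ)) '' ↑(Rfin.image F) := by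
    ext O
    simp only [Set.mem_setOf_eq, Set.mem_image, Finset.mem_coe, Finset.mem_image]
    constructor
    · rintro ⟨β, hβ, rfl⟩
      refine ⟨F β, ⟨β, mem_Rfin_of_mem_R hβ, rfl⟩, ?_⟩
      rw [hcoe, horbit]
    · rintro ⟨t, ⟨β, hβ, rfl⟩, rfl⟩
      refine ⟨β, mem_R_of_mem_Rfin hβ, ?_⟩
      rw [hcoe, horbit]
  rw [hset]
  rw [Set.ncard_image_of_injective _ Finset.coe_injective, Set.ncard_coe_finset]
  apply count_lemma Rfin σ
  · exact fun x => reflect_reflect hδδ x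
  · intro x hx
    exact mem_Rfin_of_mem_R (reflect_mem_R hδ (mem_R_of_mem_Rfin hx))
  · exact Rfin_card
  · have hconv : Rfin.filter (fun x => σ x = x) = Rfin.filter (fun β => Bex β δ = 0) := by
      apply Finset.filter_congr
      intro x _
      rw [hσ]
      simp only [reflect_fixed_iff hδδ, B_eq]
    rw [hconv]
    exact fix_count δ hδfin
end
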